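/- arXiv:2312.14362 — 5 statements merged into one kernel-verified Lean document; each statement's English description precedes it below -/
import Mathlib

section
/- Let H be a real Hilbert space, r > 0, and let rB = {z ∈ H : ‖z‖ ≤ r} be the closed ball of radius r centered at the origin, with metric projection P_{rB}. Then P_{rB} is strictly Fréchet differentiable at every point x̄ ∈ H with ‖x̄‖ > r, and its strict Fréchet derivative there is the continuous linear map x ↦ (r/‖x̄‖)·(x − (⟨x, x̄⟩/‖x̄‖²)·x̄). That is, (P_{rB}(u) − P_{rB}(v) − (r/‖x̄‖)·((u − v) − (⟨u − v, x̄⟩/‖x̄‖²)·x̄))/‖u − v‖ → 0 as u → x̄ and v → x̄ with u ≠ v. -/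
open Filter Topology Metric

/-! Outside the ball the projection is the radial retraction `x ↦ (r / ‖x‖) • x`: by the triangle
inequality this point is a nearest point of the ball, and by the parallelogram law nearest points of
a convex set are unique. The retraction is smooth away from `0`, and differentiating `r ‖x‖⁻¹ • x`
at `xb` gives the stated derivative. -/

section

variable {F : Type*} [NormedAddCommGroup F] [InnerProductSpace ℝ F]

theorem Convex.eq_of_forall_norm_sub_le {K : Set F} (hK : Convex ℝ K) {x v w : F}
    (hv : v ∈ K) (hw : w ∈ K) (hv_min : ∀ z ∈ K, ‖x - v‖ ≤ ‖x - z‖)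
    (hw_min : ∀ z ∈ K, ‖x - w‖ ≤ ‖x - z‖) : v = w := by
  set m := midpoint ℝ v w
  have hvw : ‖x - v‖ = ‖x - w‖ := le_antisymm (hv_min w hw) (hw_min v hv)
  have hvm : ‖x - v‖ ≤ ‖x - m‖ := hv_min m (hK.midpoint_mem hv hw)
  -- parallelogram law: `‖2 (x - m)‖² + ‖w - v‖² = 2 ‖x - v‖² + 2 ‖x - w‖²`
  have hpar := parallelogram_law_with_norm ℝ (x - v) (x - w)
  have hsum : x - v + (x - w) = (2 : ℝ) • (x - m) := by
    rw [smul_sub, two_smul ℝ m, midpoint_add_self, two_smul]; abel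
  rw [hsum, sub_sub_sub_cancel_left, norm_smul, Real.norm_two] at hpar
  have hwv : ‖w - v‖ ^ 2 ≤ 0 := by nlinarith [norm_nonneg (x - v)]
  exact (sub_eq_zero.1 (norm_eq_zero.1 (by nlinarith [norm_nonneg (w - v)]))).symm

theorem eq_div_norm_smul_of_forall_norm_sub_le {r : ℝ} {x v : F} (hx : r < ‖x‖)
    (hv : v ∈ closedBall (0 : F) r) (hv_min : ∀ z ∈ closedBall (0 : F) r, ‖x - v‖ ≤ ‖x - z‖) :
    v = (r / ‖x‖) • x := by
  have hr : 0 ≤ r := nonempty_closedBall.1 ⟨v, hv⟩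
  have hx0 : 0 < ‖x‖ := hr.trans_lt hx
  have hy : (r / ‖x‖) • x ∈ closedBall (0 : F) r := by
    rw [mem_closedBall_zero_iff, norm_smul, Real.norm_of_nonneg (by positivity),
      div_mul_cancel₀ _ hx0.ne']
  have hxy : ‖x - (r / ‖x‖) • x‖ = ‖x‖ - r := by
    rw [show x - (r / ‖x‖) • x = (1 - r / ‖x‖) • x by rw [sub_smul, one_smul], norm_smul,
      Real.norm_of_nonneg (sub_nonneg.2 ((div_le_one hx0).2 hx.le)), sub_mul, one_mul,
      div_mul_cancel₀ _ hx0.ne']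
  refine (convex_closedBall 0 r).eq_of_forall_norm_sub_le hv hy hv_min fun z hz => ?_
  calc ‖x - (r / ‖x‖) • x‖ = ‖x‖ - r := hxy
    _ ≤ ‖x‖ - ‖z‖ := by linarith [mem_closedBall_zero_iff.1 hz]
    _ ≤ ‖x - z‖ := norm_sub_norm_le x z

theorem hasStrictFDerivAt_norm_inv {x : F} (hx : x ≠ 0) :
    HasStrictFDerivAt (fun y : F => ‖y‖⁻¹) (-(‖x‖ ^ 3)⁻¹ • innerSL ℝ x) x := by
  have hx0 : 0 < ‖x‖ := norm_pos_iff.2 hx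
  have h := (hasStrictDerivAt_inv (Real.sqrt_pos.2 (by positivity)).ne').comp_hasStrictFDerivAt x
    ((hasStrictFDerivAt_norm_sq x).sqrt (by positivity))
  simp only [Function.comp_def, Real.sqrt_sq (norm_nonneg _)] at h
  refine h.congr_fderiv ?_
  ext v
  simp
  field_simp

theorem hasStrictFDerivAt_div_norm_smul (r : ℝ) {x : F} (hx : x ≠ 0) :
    HasStrictFDerivAt (fun y : F => (r / ‖y‖) • y)
      ((r / ‖x‖) • (ContinuousLinearMap.id ℝ F - (‖x‖ ^ 2)⁻¹ • (innerSL ℝ x).smulRight x)) x := by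
  have hx0 : ‖x‖ ≠ 0 := norm_ne_zero_iff.2 hx
  simp only [div_eq_mul_inv]
  refine (((hasStrictFDerivAt_norm_inv hx).const_mul r).smul (hasStrictFDerivAt_id x)).congr_fderiv ?_
  ext v
  simp only [add_apply, FunLike.coe_smul, Pi.smul_apply, ContinuousLinearMap.id_apply,
    ContinuousLinearMap.smulRight_apply, sub_apply, innerSL_apply_apply, smul_eq_mul, smul_sub,
    smul_smul, id_eq]
  match_scalars <;> field_simp

end

theorem HasStrictFDerivAt.tendsto_inv_norm_sub_smul {E G : Type*} [NormedAddCommGroup E]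
    [NormedSpace ℝ E] [NormedAddCommGroup G] [NormedSpace ℝ G] {f : E → G} {f' : E →L[ℝ] G} {x : E}
    (hf : HasStrictFDerivAt f f' x) :
    Tendsto (fun p : E × E => ‖p.1 - p.2‖⁻¹ • (f p.1 - f p.2 - f' (p.1 - p.2))) (𝓝 (x, x)) (𝓝 0) :=
  hf.isLittleO.norm_right.tendsto_inv_smul_nhds_zero

theorem strictFrechet_proj_closedBall_outside_general {H : Type*} [NormedAddCommGroup H]
    [InnerProductSpace ℝ H] (r : ℝ)
    (P : H → H)
    (hP : ∀ x, P x ∈ Metric.closedBall (0 : H) r ∧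
      ∀ z ∈ Metric.closedBall (0 : H) r, ‖x - P x‖ ≤ ‖x - z‖)
    (xb : H) (hxb : r < ‖xb‖) :
    Filter.Tendsto (fun p : H × H =>
        ‖p.1 - p.2‖⁻¹ • (P p.1 - P p.2 -
          (r / ‖xb‖) • ((p.1 - p.2) - ((inner ℝ (p.1 - p.2) xb : ℝ) / ‖xb‖ ^ 2) • xb)))
      (𝓝[{p : H × H | p.1 ≠ p.2}] (xb, xb)) (𝓝 0) := by
  have hr : 0 ≤ r := nonempty_closedBall.1 ⟨_, (hP xb).1⟩
  have hxb0 : xb ≠ 0 := norm_pos_iff.1 (hr.trans_lt hxb)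
  have hP_eq : (fun y : H => (r / ‖y‖) • y) =ᶠ[𝓝 xb] P := by
    filter_upwards [(continuous_norm.tendsto xb).eventually_const_lt hxb] with y hy
    exact (eq_div_norm_smul_of_forall_norm_sub_le hy (hP y).1 (hP y).2).symm
  have hP_deriv := (hasStrictFDerivAt_div_norm_smul r hxb0).congr_of_eventuallyEq hP_eq
  convert hP_deriv.tendsto_inv_norm_sub_smul.mono_left nhdsWithin_le_nhds using 5 with p
  simp [real_inner_comm, div_eq_inv_mul, smul_smul]

/-- The metric projection onto the closed ball `rB` of radius `r > 0` centered at the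
origin of a real Hilbert space is strictly Fréchet differentiable at every point `xb`
with `‖xb‖ > r`, with strict Fréchet derivative
`x ↦ (r/‖xb‖) • (x - (⟨x, xb⟩/‖xb‖²) • xb)`. -/
theorem strictFrechet_proj_closedBall_outside {H : Type*} [NormedAddCommGroup H]
    [InnerProductSpace ℝ H] [CompleteSpace H] (r : ℝ) (hr : 0 < r)
    (P : H → H)
    (hP : ∀ x, P x ∈ Metric.closedBall (0 : H) r ∧
      ∀ z ∈ Metric.closedBall (0 : H) r, ‖x - P x‖ ≤ ‖x - z‖)
    (xb : H) (hxb : r < ‖xb‖) :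
    Filter.Tendsto (fun p : H × H =>
        ‖p.1 - p.2‖⁻¹ • (P p.1 - P p.2 -
          (r / ‖xb‖) • ((p.1 - p.2) - ((inner ℝ (p.1 - p.2) xb : ℝ) / ‖xb‖ ^ 2) • xb)))
      (𝓝[{p : H × H | p.1 ≠ p.2}] (xb, xb)) (𝓝 0) :=
  strictFrechet_proj_closedBall_outside_general r P hP xb hxb
end

section
/- Let H be a real Hilbert space, r > 0, rB = {z ∈ H : ‖z‖ ≤ r} the closed ball of radius r centered at the origin with metric projection P_{rB}, and let x̄ ∈ H with ‖x̄‖ = r. Suppose w ∈ H, w ≠ 0, is a direction for which there exists δ > 0 such that ‖x̄ + t·w‖ ≥ r for all t ∈ (0, δ). Then the one-sided Gâteaux directional derivative of P_{rB} at x̄ along w exists and equals w − (1/r²)·⟨x̄, w⟩·x̄; that is, (P_{rB}(x̄ + t·w) − P_{rB}(x̄))/t → w − (1/r²)·⟨x̄, w⟩·x̄ as t → 0⁺. -/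
open Filter Topology Metric Set

/-!
Outside the open ball, the projection onto `closedBall 0 r` is the radial retraction
`x ↦ (r / ‖x‖) • x`: this point realizes the lower bound `‖x‖ - r ≤ ‖x - z‖`, and nearest points
in convex sets of a strictly convex space are unique. Along the outward direction, `P` therefore
agrees for small `t > 0` with the smooth curve `t ↦ (r / ‖xb + t • w‖) • (xb + t • w)`, whose
derivative at `0` is the tangential part of `w`.
-/

section NearestPoint

variable {E : Type*} [NormedAddCommGroup E] [NormedSpace ℝ E]

theorem Convex.eq_of_isMinOn_norm_sub [StrictConvexSpace ℝ E] {K : Set E} (hK : Convex ℝ K)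
    {x u v : E} (hu : u ∈ K) (hv : v ∈ K) (hu_min : IsMinOn (‖x - ·‖) K u)
    (hv_min : IsMinOn (‖x - ·‖) K v) : u = v := by
  have hd : ‖x - u‖ = ‖x - v‖ := le_antisymm (hu_min hv) (hv_min hu)
  have hmid : (1 / 2 : ℝ) • (u + v) ∈ K := by
    simpa [smul_add] using hK hu hv (by norm_num) (by norm_num) (by norm_num)
  by_contra huv
  have hlt : ‖(1 / 2 : ℝ) • ((x - u) + (x - v))‖ < ‖x - u‖ :=
    (norm_midpoint_lt_iff hd).mpr (sub_right_injective.ne huv)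
  rw [show (1 / 2 : ℝ) • ((x - u) + (x - v)) = x - (1 / 2 : ℝ) • (u + v) by module] at hlt
  exact (hu_min hmid).not_gt hlt

theorem isMinOn_norm_sub_closedBall_div_norm_smul {r : ℝ} (hr : 0 < r) {x : E}
    (hx : r ≤ ‖x‖) : IsMinOn (‖x - ·‖) (closedBall 0 r) ((r / ‖x‖) • x) := by
  have hxpos : 0 < ‖x‖ := hr.trans_le hx
  have hdist : ‖x - (r / ‖x‖) • x‖ = ‖x‖ - r := by
    have hcoef : 0 ≤ 1 - r / ‖x‖ := sub_nonneg.mpr ((div_le_one hxpos).mpr hx)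
    rw [show x - (r / ‖x‖) • x = (1 - r / ‖x‖) • x by rw [sub_smul, one_smul], norm_smul,
      Real.norm_of_nonneg hcoef]
    field_simp
  intro z hz
  have hz' : ‖z‖ ≤ r := mem_closedBall_zero_iff.mp hz
  show ‖x - (r / ‖x‖) • x‖ ≤ ‖x - z‖
  linarith [norm_sub_norm_le x z]

theorem norm_div_norm_smul {r : ℝ} (hr : 0 ≤ r) {x : E} (hx : x ≠ 0) :
    ‖(r / ‖x‖) • x‖ = r := by
  rw [norm_smul, Real.norm_of_nonneg (by positivity), div_mul_cancel₀ _ (norm_ne_zero_iff.mpr hx)]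

theorem eq_div_norm_smul_of_isMinOn_closedBall [StrictConvexSpace ℝ E] {r : ℝ} (hr : 0 < r)
    {x p : E} (hx : r ≤ ‖x‖) (hp : p ∈ closedBall 0 r)
    (hp_min : IsMinOn (‖x - ·‖) (closedBall 0 r) p) :
    p = (r / ‖x‖) • x := by
  have hx0 : x ≠ 0 := norm_pos_iff.mp (hr.trans_le hx)
  refine (convex_closedBall 0 r).eq_of_isMinOn_norm_sub hp ?_ hp_min
    (isMinOn_norm_sub_closedBall_div_norm_smul hr hx)
  exact mem_closedBall_zero_iff.mpr (norm_div_norm_smul hr.le hx0).le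

end NearestPoint

section RadialRetraction

open RealInnerProductSpace

variable {F : Type*} [NormedAddCommGroup F] [InnerProductSpace ℝ F]

theorem HasDerivAt.norm {f : ℝ → F} {f' : F} {t : ℝ} (hf : HasDerivAt f f' t)
    (h0 : f t ≠ 0) : HasDerivAt (‖f ·‖) (⟪f t, f'⟫ / ‖f t‖) t := by
  have hsq : ‖f t‖ ^ 2 ≠ 0 := by positivity
  convert hf.norm_sq.sqrt hsq using 1
  · ext s
    rw [Real.sqrt_sq (norm_nonneg _)]
  · rw [Real.sqrt_sq (norm_nonneg _)]
    ring

theorem HasDerivAt.div_norm_smul {f : ℝ → F} {f' : F} {t r : ℝ} (hf : HasDerivAt f f' t)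
    (hft : ‖f t‖ = r) (hr : r ≠ 0) :
    HasDerivAt (fun s => (r / ‖f s‖) • f s) (f' - (1 / r ^ 2) • ⟪f t, f'⟫ • f t) t := by
  have hf0 : f t ≠ 0 := norm_ne_zero_iff.mp (hft ▸ hr)
  have hnorm := hf.norm hf0
  rw [hft] at hnorm
  have hcoef := (hasDerivAt_const t r).div hnorm (hft ▸ hr)
  convert hcoef.smul hf using 1
  · rfl
  simp only [Pi.div_apply, hft, div_self hr, one_smul]
  match_scalars
  · field_simp
  · field_simp
    ring

end RadialRetraction

theorem gateaux_proj_closedBall_sphere_outward_general {H : Type*} [NormedAddCommGroup H]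
    [InnerProductSpace ℝ H] (r : ℝ) (hr : 0 < r)
    (P : H → H)
    (hP : ∀ x, P x ∈ Metric.closedBall (0 : H) r ∧
      ∀ z ∈ Metric.closedBall (0 : H) r, ‖x - P x‖ ≤ ‖x - z‖)
    (xb : H) (hxb : ‖xb‖ = r) (w : H)
    (hdir : ∃ δ > (0 : ℝ), ∀ t ∈ Set.Ioo (0 : ℝ) δ, r ≤ ‖xb + t • w‖) :
    Filter.Tendsto (fun t : ℝ => t⁻¹ • (P (xb + t • w) - P xb)) (𝓝[>] (0 : ℝ))
      (𝓝 (w - (1 / r ^ 2) • (inner ℝ xb w : ℝ) • xb)) := by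
  obtain ⟨δ, hδ, hout⟩ := hdir
  have hproj : ∀ x : H, r ≤ ‖x‖ → P x = (r / ‖x‖) • x := fun x hx =>
    eq_div_norm_smul_of_isMinOn_closedBall hr hx (hP x).1 (isMinOn_iff.mpr (hP x).2)
  have hline : HasDerivAt (fun t : ℝ => xb + t • w) w 0 := by
    simpa using ((hasDerivAt_id (0 : ℝ)).smul_const w).const_add xb
  have hcurve := HasDerivAt.div_norm_smul hline (by simpa using hxb) hr.ne'
  simp only [zero_smul, add_zero] at hcurve
  refine hcurve.tendsto_slope_zero_right.congr' ?_
  filter_upwards [Ioo_mem_nhdsGT hδ] with t ht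
  rw [hproj _ (hout t ht), hproj xb hxb.ge, zero_add, zero_smul, add_zero]

/-- Let `P` be the metric projection onto the closed ball of radius `r > 0` centered at
the origin, and let `‖xb‖ = r`. If `w ≠ 0` is a direction with `‖xb + t • w‖ ≥ r` for all
small `t > 0`, then the one-sided Gâteaux directional derivative of `P` at `xb` along `w`
exists and equals `w - (1/r²) • ⟨xb, w⟩ • xb`. -/
theorem gateaux_proj_closedBall_sphere_outward {H : Type*} [NormedAddCommGroup H]
    [InnerProductSpace ℝ H] [CompleteSpace H] (r : ℝ) (hr : 0 < r)
    (P : H → H)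
    (hP : ∀ x, P x ∈ Metric.closedBall (0 : H) r ∧
      ∀ z ∈ Metric.closedBall (0 : H) r, ‖x - P x‖ ≤ ‖x - z‖)
    (xb : H) (hxb : ‖xb‖ = r) (w : H) (hw : w ≠ 0)
    (hdir : ∃ δ > (0 : ℝ), ∀ t ∈ Set.Ioo (0 : ℝ) δ, r ≤ ‖xb + t • w‖) :
    Filter.Tendsto (fun t : ℝ => t⁻¹ • (P (xb + t • w) - P xb)) (𝓝[>] (0 : ℝ))
      (𝓝 (w - (1 / r ^ 2) • (inner ℝ xb w : ℝ) • xb)) :=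
  gateaux_proj_closedBall_sphere_outward_general r hr P hP xb hxb w hdir
end

section
/- Let 𝕂 = {x ∈ ℓ² : xᵢ ≥ 0 for all i ∈ ℕ} be the positive cone in ℓ² with metric projection P_𝕂, and let x ∈ ℓ² satisfy xᵢ > 0 for all i ∈ ℕ. Then P_𝕂 is not Fréchet differentiable at x; that is, there is no continuous linear map A : ℓ² → ℓ² such that (P_𝕂(u) − P_𝕂(x) − A(u − x))/‖u − x‖ → 0 as u → x. -/
/-!
At a point of Fréchet differentiability the linear part cancels in the symmetric second difference
`P (x + h) + P (x - h) - 2 P x`, which is therefore `o(‖h‖)`. Take `h = 2 xₖ eₖ`, which tends to `0`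
as `k → ∞` because `x ∈ ℓ²`. The point `x + h` lies in the cone and is fixed by `P`, while the
projection clips the `k`-th coordinate of `x - h` at `0`, so `P (x - h) = x - xₖ eₖ`. The second
difference is then `xₖ eₖ`, of norm `‖h‖ / 2`.
-/

open Filter Topology Metric Set
open scoped ENNReal

namespace lp

variable {α : Type*} {E : α → Type*} [∀ i, NormedAddCommGroup (E i)] {p : ℝ≥0∞}

theorem tendsto_norm_apply_cofinite_zero (hp : 0 < p.toReal) (f : lp E p) :
    Tendsto (fun i => ‖f i‖) cofinite (𝓝 0) := by
  have h := (lp.hasSum_norm hp f).summable.tendsto_cofinite_zero.rpow_const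
    (p := p.toReal⁻¹) (Or.inr (by positivity))
  simpa [← Real.rpow_mul (norm_nonneg _), mul_inv_cancel₀ hp.ne', Real.zero_rpow, hp.ne'] using h

theorem eq_single_of_norm_le_norm_apply [DecidableEq α] (hp : 0 < p.toReal) {f : lp E p} {k : α}
    (h : ‖f‖ ≤ ‖f k‖) : f = lp.single p k (f k) := by
  have hcompl := lp.norm_compl_sum_single hp f {k}
  rw [Finset.sum_singleton, Finset.sum_singleton] at hcompl
  have hle : ‖f‖ ^ p.toReal ≤ ‖f k‖ ^ p.toReal := Real.rpow_le_rpow (lp.norm_nonneg' _) h hp.le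
  have hzero : ‖f - lp.single p k (f k)‖ ^ p.toReal = 0 :=
    le_antisymm (by linarith) (Real.rpow_nonneg (lp.norm_nonneg' _) _)
  rw [Real.rpow_eq_zero (lp.norm_nonneg' _) hp.ne', lp.norm_eq_zero_iff, sub_eq_zero] at hzero
  exact hzero

end lp

section SecondDifference

variable {E F : Type*} [NormedAddCommGroup E] [NormedSpace ℝ E] [NormedAddCommGroup F]
  [NormedSpace ℝ F]

theorem tendsto_inv_norm_smul_second_difference {f : E → F} {f' : E →L[ℝ] F} {x : E}
    (hf : Tendsto (fun u => ‖u - x‖⁻¹ • (f u - f x - f' (u - x))) (𝓝[≠] x) (𝓝 0))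
    {ι : Type*} {l : Filter ι} {h : ι → E} (hh : Tendsto h l (𝓝[≠] 0)) :
    Tendsto (fun i => ‖h i‖⁻¹ • (f (x + h i) + f (x - h i) - (2 : ℝ) • f x)) l (𝓝 0) := by
  have hplus : Tendsto (fun i => x + h i) l (𝓝[≠] x) := by
    have hadd : Tendsto (x + ·) (𝓝[≠] (0 : E)) (𝓝[≠] (x + 0)) := map_add_left_nhdsNE.le
    rw [add_zero] at hadd
    exact hadd.comp hh
  have hminus : Tendsto (fun i => x - h i) l (𝓝[≠] x) := by
    have hsub : Tendsto (x - ·) (𝓝[≠] (0 : E)) (𝓝[≠] (x - 0)) := map_subLeft_nhdsNE.le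
    rw [sub_zero] at hsub
    exact hsub.comp hh
  have hsum := (hf.comp hplus).add (hf.comp hminus)
  rw [add_zero] at hsum
  refine hsum.congr fun i => ?_
  simp only [Function.comp_apply, add_sub_cancel_left, sub_sub_cancel_left, norm_neg, map_neg]
  module

end SecondDifference

section PositiveCone

variable {α : Type*} {P : lp (fun _ : α => ℝ) 2 → lp (fun _ : α => ℝ) 2}

theorem proj_eq_self_of_nonneg
    (hP : ∀ y, ∀ z : lp (fun _ : α => ℝ) 2, (∀ i, 0 ≤ z i) → ‖y - P y‖ ≤ ‖y - z‖)
    {y : lp (fun _ : α => ℝ) 2} (hy : ∀ i, 0 ≤ y i) : P y = y := by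
  have h := hP y y hy
  rw [sub_self, norm_zero, norm_le_zero_iff, sub_eq_zero] at h
  exact h.symm

theorem proj_add_single_of_nonneg [DecidableEq α]
    (hP : ∀ y, ∀ z : lp (fun _ : α => ℝ) 2, (∀ i, 0 ≤ z i) → ‖y - P y‖ ≤ ‖y - z‖)
    {y : lp (fun _ : α => ℝ) 2} (hy : ∀ i, 0 ≤ y i) (k : α) {c : ℝ} (hc : 0 ≤ c) :
    P (y + lp.single 2 k c) = y + lp.single 2 k c :=
  proj_eq_self_of_nonneg hP fun i => add_nonneg (hy i) <| by
    simp only [lp.single_apply, Pi.single_apply]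
    split_ifs
    exacts [hc, le_rfl]

theorem proj_sub_single_of_nonneg [DecidableEq α]
    (hP : ∀ y, (∀ i, 0 ≤ P y i) ∧
      ∀ z : lp (fun _ : α => ℝ) 2, (∀ i, 0 ≤ z i) → ‖y - P y‖ ≤ ‖y - z‖)
    {y : lp (fun _ : α => ℝ) 2} (hy : ∀ i, 0 ≤ y i) {k : α} {c : ℝ} (hc : y k ≤ c) :
    P (y - lp.single 2 k c) = y - lp.single 2 k (y k) := by
  set v := y - lp.single 2 k c
  set w := v - P v
  set z : lp (fun _ : α => ℝ) 2 := y - lp.single 2 k (y k)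
  have hz : ∀ i, 0 ≤ z i := by
    intro i
    rcases eq_or_ne i k with rfl | hi
    · simp [z]
    · simpa [z, Pi.single_apply, hi] using hy i
  have hw_le : ‖w‖ ≤ c - y k :=
    calc ‖w‖ ≤ ‖v - z‖ := (hP v).2 z hz
      _ = c - y k := by
        rw [show v - z = lp.single 2 k (y k - c) by simp only [v, z, lp.single_sub]; abel]
        rw [lp.norm_single (by norm_num), Real.norm_eq_abs, abs_sub_comm,
          abs_of_nonneg (by linarith)]
  have hwk : w k = y k - c - P v k := by simp [w, v]
  have hPvk : P v k = 0 := by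
    have := (lp.norm_apply_le_norm two_ne_zero w k).trans hw_le
    rw [hwk, Real.norm_eq_abs, abs_le] at this
    linarith [(hP v).1 k]
  have hw_norm : ‖w k‖ = c - y k := by
    rw [hwk, hPvk, sub_zero, Real.norm_eq_abs, abs_sub_comm, abs_of_nonneg (by linarith)]
  have hw := lp.eq_single_of_norm_le_norm_apply (by norm_num) (hw_le.trans hw_norm.ge)
  rw [hwk, hPvk, sub_zero] at hw
  calc P v = v - w := (sub_sub_cancel v (P v)).symm
    _ = z := by rw [hw, lp.single_sub]; simp only [v, z]; abel

end PositiveCone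

/-- The metric projection `P` onto the positive cone `𝕂` of `ℓ²` is not Fréchet
differentiable at any point `x` with all coordinates strictly positive. -/
theorem not_frechet_proj_positiveCone_lp2_pos
    (P : lp (fun _ : ℕ => ℝ) 2 → lp (fun _ : ℕ => ℝ) 2)
    (hP : ∀ x, (∀ i : ℕ, 0 ≤ P x i) ∧
      ∀ z : lp (fun _ : ℕ => ℝ) 2, (∀ i : ℕ, 0 ≤ z i) → ‖x - P x‖ ≤ ‖x - z‖)
    (x : lp (fun _ : ℕ => ℝ) 2) (hx : ∀ i : ℕ, 0 < x i) :
    ¬ ∃ A : lp (fun _ : ℕ => ℝ) 2 →L[ℝ] lp (fun _ : ℕ => ℝ) 2,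
      Filter.Tendsto (fun u => ‖u - x‖⁻¹ • (P u - P x - A (u - x)))
        (𝓝[≠] x) (𝓝 0) := by
  rintro ⟨A, hA⟩
  set h : ℕ → lp (fun _ : ℕ => ℝ) 2 := fun k => lp.single 2 k (2 * x k)
  have hnorm_h : ∀ k, ‖h k‖ = 2 * x k := fun k => by
    rw [lp.norm_single (by norm_num), Real.norm_eq_abs, abs_of_pos (by linarith [hx k])]
  have hh : Tendsto h cofinite (𝓝[≠] 0) := by
    refine tendsto_nhdsWithin_iff.2 ⟨tendsto_zero_iff_norm_tendsto_zero.2 ?_, ?_⟩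
    · simpa [hnorm_h, Real.norm_eq_abs, abs_of_pos (hx _)] using
        (lp.tendsto_norm_apply_cofinite_zero (by norm_num) x).const_mul 2
    · refine Eventually.of_forall fun k => ?_
      rw [mem_compl_singleton_iff, ← norm_ne_zero_iff, hnorm_h]
      linarith [hx k]
  have hPx : P x = x := proj_eq_self_of_nonneg (fun y => (hP y).2) fun i => (hx i).le
  have hPplus : ∀ k, P (x + h k) = x + h k := fun k =>
    proj_add_single_of_nonneg (fun y => (hP y).2) (fun i => (hx i).le) k (by linarith [hx k])
  have hPminus : ∀ k, P (x - h k) = x - lp.single 2 k (x k) := fun k =>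
    proj_sub_single_of_nonneg hP (fun i => (hx i).le) (by linarith [hx k])
  have hsecond : ∀ k, P (x + h k) + P (x - h k) - (2 : ℝ) • P x = lp.single 2 k (x k) := by
    intro k
    rw [hPplus, hPminus, hPx]
    simp only [h, two_mul, lp.single_add]
    module
  have hquot : ∀ k, ‖‖h k‖⁻¹ • (P (x + h k) + P (x - h k) - (2 : ℝ) • P x)‖ = 2⁻¹ := by
    intro k
    rw [hsecond, norm_smul, hnorm_h, lp.norm_single (by norm_num), norm_inv, Real.norm_eq_abs,
      Real.norm_eq_abs, abs_of_pos (hx k), abs_of_pos (by linarith [hx k])]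
    field_simp [(hx k).ne']
  have := (tendsto_inv_norm_smul_second_difference hA hh).norm
  simp only [hquot, norm_zero, tendsto_const_nhds_iff] at this
  norm_num at this
end

section
/- Let 𝕂 = {x ∈ ℓ² : xᵢ ≥ 0 for all i ∈ ℕ} be the positive cone in ℓ² with metric projection P_𝕂, and let x ∈ ℓ² satisfy xᵢ > 0 for all i ∈ ℕ. Then for every w ∈ ℓ² with w ≠ 0, the one-sided Gâteaux directional derivative of P_𝕂 at x along w exists and equals w; that is, (P_𝕂(x + t·w) − P_𝕂(x))/t → w as t → 0⁺. -/
/-!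
The metric projection onto the positive cone of `ℓ²` is the coordinatewise positive part: it
minimizes the distance coordinate by coordinate, and projections onto convex sets are unique.
Since every `x i` is positive, each coordinate of the difference quotient
`t⁻¹ • (P (x + t • w) - P x)` equals `w i` for small `t > 0`; no single `t` works for all
coordinates at once (`x i → 0`), but since `t ↦ max t 0` is 1-Lipschitz the coordinates are
dominated by `|w i|`, and dominated convergence in `ℓ²` finishes the proof.
-/

open Filter Topology
open scoped ENNReal InnerProductSpace

theorem Convex.eq_of_isMinOn_norm_sub_s15 {F : Type*} [NormedAddCommGroup F] [InnerProductSpace ℝ F]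
    {K : Set F} (hK : Convex ℝ K) {y p q : F} (hp : p ∈ K) (hq : q ∈ K)
    (hp_min : IsMinOn (fun z => ‖y - z‖) K p) (hq_min : IsMinOn (fun z => ‖y - z‖) K q) :
    p = q := by
  have hpq := (norm_eq_iInf_iff_real_inner_le_zero hK hp).1 (hp_min.iInf_eq hp).symm q hq
  have hqp := (norm_eq_iInf_iff_real_inner_le_zero hK hq).1 (hq_min.iInf_eq hq).symm p hp
  have h : ‖q - p‖ ^ 2 = ⟪y - p, q - p⟫_ℝ + ⟪y - q, p - q⟫_ℝ := by
    rw [← real_inner_self_eq_norm_sq, ← neg_sub q p, inner_neg_right, ← sub_eq_add_neg,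
      ← inner_sub_left, sub_sub_sub_cancel_left]
  have : ‖q - p‖ = 0 := by nlinarith [norm_nonneg (q - p)]
  exact (sub_eq_zero.1 (norm_eq_zero.1 this)).symm

theorem abs_inv_mul_max_sub_max_le (a b : ℝ) {t : ℝ} (ht : 0 < t) :
    |t⁻¹ * (max (a + t * b) 0 - max a 0)| ≤ |b| := by
  rw [abs_mul, abs_inv, abs_of_pos ht, inv_mul_le_iff₀ ht]
  simpa [abs_mul, abs_of_pos ht] using abs_max_sub_max_le_abs (a + t * b) a 0

theorem tendsto_inv_mul_max_sub_max_of_pos {a : ℝ} (ha : 0 < a) (b : ℝ) :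
    Tendsto (fun t : ℝ => t⁻¹ * (max (a + t * b) 0 - max a 0)) (𝓝[>] 0) (𝓝 b) := by
  have hpos : ∀ᶠ t in 𝓝 (0 : ℝ), 0 < a + t * b :=
    (Continuous.tendsto (by fun_prop) 0).eventually (lt_mem_nhds (by simpa using ha))
  refine tendsto_const_nhds.congr' ?_
  filter_upwards [nhdsWithin_le_nhds hpos, self_mem_nhdsWithin] with t ht ht0
  rw [max_eq_left ht.le, max_eq_left ha.le]
  field_simp [(show (0 : ℝ) < t from ht0).ne']
  ring

namespace lp

variable {α : Type*} {p : ℝ≥0∞}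

section Dominated

variable {E : α → Type*} [∀ i, NormedAddCommGroup (E i)]

theorem tendsto_of_tendsto_apply_of_dominated [Fact (1 ≤ p)] (hp : p ≠ ∞) {ι : Type*}
    {l : Filter ι} {F : ι → lp E p} {f : lp E p} {g : α → ℝ} (hg : Memℓp g p)
    (hF : ∀ i, Tendsto (fun k => F k i) l (𝓝 (f i))) (hFg : ∀ᶠ k in l, ∀ i, ‖F k i‖ ≤ g i) :
    Tendsto F l (𝓝 f) := by
  have hp0 : 0 < p.toReal := ENNReal.toReal_pos (zero_lt_one.trans_le Fact.out).ne' hp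
  have hsum : Tendsto (fun k => ‖F k - f‖ ^ p.toReal) l (𝓝 0) := by
    simp_rw [norm_rpow_eq_tsum hp0]
    have hdom : Summable fun i => |g i + ‖f i‖| ^ p.toReal := by
      simpa using (hg.add (lp.memℓp f).norm).summable hp0
    have hlim : ∀ i, Tendsto (fun k => ‖(F k - f) i‖ ^ p.toReal) l (𝓝 0) := by
      intro i
      have := ((continuous_norm.tendsto _).comp (tendsto_sub_nhds_zero_iff.2 (hF i))).rpow_const
        (.inr hp0.le)
      simpa [Function.comp_def, Real.zero_rpow hp0.ne'] using this
    have hbound : ∀ᶠ k in l, ∀ i, ‖‖(F k - f) i‖ ^ p.toReal‖ ≤ |g i + ‖f i‖| ^ p.toReal := by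
      filter_upwards [hFg] with k hk i
      rw [Real.norm_of_nonneg (by positivity)]
      gcongr
      calc ‖(F k - f) i‖ = ‖F k i - f i‖ := rfl
        _ ≤ ‖F k i‖ + ‖f i‖ := norm_sub_le _ _
        _ ≤ |g i + ‖f i‖| := by grw [hk i]; exact le_abs_self _
    simpa using tendsto_tsum_of_dominated_convergence hdom hlim hbound
  have hroot := (Real.continuousAt_rpow_const 0 p.toReal⁻¹ (.inr (inv_pos.2 hp0).le)).tendsto.comp
    hsum
  rw [tendsto_iff_norm_sub_tendsto_zero]
  simpa [Function.comp_def, Real.rpow_rpow_inv (norm_nonneg _) hp0.ne',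
    Real.zero_rpow (inv_pos.2 hp0).ne'] using hroot

end Dominated

def posPart (f : lp (fun _ : α => ℝ) p) : lp (fun _ : α => ℝ) p :=
  ⟨fun i => max (f i) 0, (lp.memℓp f).mono' fun i => by
    simpa using abs_max_sub_max_le_abs (f i) 0 0⟩

@[simp]
theorem posPart_apply (f : lp (fun _ : α => ℝ) p) (i : α) : posPart f i = max (f i) 0 := rfl

theorem posPart_nonneg (f : lp (fun _ : α => ℝ) p) (i : α) : 0 ≤ posPart f i :=
  le_max_right _ _

theorem norm_sub_posPart_le (hp : p ≠ 0) (f : lp (fun _ : α => ℝ) p) {z : lp (fun _ : α => ℝ) p}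
    (hz : ∀ i, 0 ≤ z i) : ‖f - posPart f‖ ≤ ‖f - z‖ := by
  refine norm_mono hp fun i => ?_
  simp only [coeFn_sub, Pi.sub_apply, posPart_apply, Real.norm_eq_abs]
  rcases le_total 0 (f i) with hf | hf
  · simp [max_eq_left hf]
  · rw [max_eq_right hf, abs_of_nonpos (by linarith), abs_of_nonpos (by linarith [hz i])]
    linarith [hz i]

theorem convex_setOf_forall_nonneg :
    Convex ℝ {z : lp (fun _ : α => ℝ) p | ∀ i, 0 ≤ z i} := by
  intro y hy z hz a b ha hb _ i
  exact add_nonneg (mul_nonneg ha (hy i)) (mul_nonneg hb (hz i))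

end lp

/-- Let `P` be the metric projection onto the positive cone `𝕂` of `ℓ²` and let `x` have
all coordinates strictly positive.  Then for every nonzero `w`, the one-sided Gâteaux
directional derivative of `P` at `x` along `w` exists and equals `w`. -/
theorem gateaux_proj_positiveCone_lp2_pos
    (P : lp (fun _ : ℕ => ℝ) 2 → lp (fun _ : ℕ => ℝ) 2)
    (hP : ∀ x, (∀ i : ℕ, 0 ≤ P x i) ∧
      ∀ z : lp (fun _ : ℕ => ℝ) 2, (∀ i : ℕ, 0 ≤ z i) → ‖x - P x‖ ≤ ‖x - z‖)
    (x : lp (fun _ : ℕ => ℝ) 2) (hx : ∀ i : ℕ, 0 < x i) :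
    ∀ w : lp (fun _ : ℕ => ℝ) 2, w ≠ 0 →
      Filter.Tendsto (fun t : ℝ => t⁻¹ • (P (x + t • w) - P x)) (𝓝[>] (0 : ℝ))
        (𝓝 w) := by
  intro w _
  have hK : Convex ℝ {z : lp (fun _ : ℕ => ℝ) 2 | ∀ i, 0 ≤ z i} := lp.convex_setOf_forall_nonneg
  obtain rfl : P = lp.posPart := funext fun y =>
    hK.eq_of_isMinOn_norm_sub_s15 (hP y).1 (lp.posPart_nonneg y) (fun z hz => (hP y).2 z hz)
      (fun z hz => lp.norm_sub_posPart_le two_ne_zero y hz)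
  have hcoord (t : ℝ) (i : ℕ) : (t⁻¹ • (lp.posPart (x + t • w) - lp.posPart x)) i =
      t⁻¹ * (max (x i + t * w i) 0 - max (x i) 0) := rfl
  refine lp.tendsto_of_tendsto_apply_of_dominated ENNReal.ofNat_ne_top (lp.memℓp w).norm
    (fun i => ?_) ?_
  · simpa only [hcoord] using tendsto_inv_mul_max_sub_max_of_pos (hx i) (w i)
  · filter_upwards [self_mem_nhdsWithin] with t ht i
    simpa only [hcoord, Real.norm_eq_abs] using abs_inv_mul_max_sub_max_le (x i) (w i) ht
end

section
/- Let 𝕂 = {x ∈ ℓ² : xᵢ ≥ 0 for all i ∈ ℕ} be the positive cone in ℓ² with metric projection P_𝕂, and let x ∈ ℓ² satisfy |xᵢ| > 0 for all i ∈ ℕ and xⱼ·x_k < 0 for at least one pair j, k ∈ ℕ. Then P_𝕂 is not Fréchet differentiable at x; that is, there is no continuous linear map A : ℓ² → ℓ² such that (P_𝕂(u) − P_𝕂(x) − A(u − x))/‖u − x‖ → 0 as u → x. -/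
/-!
The projection onto the positive cone acts coordinatewise as `u ↦ max u 0`, so along the
direction `eᵢ` its `i`-th coordinate has a kink at distance `|xᵢ|` from `x`. Since `xᵢ → 0`,
every neighbourhood of `x` contains such kinks, and a linear map `A` cannot follow
`t ↦ max (xᵢ + t) 0` on both sides of a kink: the slope `(A eᵢ)ᵢ` is off by a fixed fraction
for `t = -xᵢ/2` or for `t = -2xᵢ`, i.e. at a relative error that does not shrink with `|t|`.
-/

open Filter Topology
theorem lp.norm_sub_single_sq {ι : Type*} [DecidableEq ι] (v : lp (fun _ : ι => ℝ) 2) (i : ι)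
    (t : ℝ) : ‖v - lp.single 2 i t‖ ^ 2 = ‖v‖ ^ 2 - 2 * (v i * t) + t ^ 2 := by
  rw [norm_sub_sq_real, lp.inner_single_right, lp.norm_single (by norm_num), Real.norm_eq_abs,
    sq_abs, real_inner_eq_re_inner]
  simp [mul_comm]

theorem apply_eq_max_zero_of_forall_norm_sub_le {ι : Type*} {y p : lp (fun _ : ι => ℝ) 2}
    (hp : ∀ i, 0 ≤ p i)
    (hmin : ∀ z : lp (fun _ : ι => ℝ) 2, (∀ i, 0 ≤ z i) → ‖y - p‖ ≤ ‖y - z‖) (i : ι) :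
    p i = max (y i) 0 := by
  classical
  have hz : ∀ j, 0 ≤ (p + lp.single 2 i (max (y i) 0 - p i) : lp (fun _ : ι => ℝ) 2) j := by
    intro j
    rcases eq_or_ne j i with rfl | hj
    · simp
    · simp [Pi.single_eq_of_ne hj, hp j]
  have hsq : ‖y - p‖ ^ 2 ≤ ‖(y - p) - lp.single 2 i (max (y i) 0 - p i)‖ ^ 2 := by
    rw [sub_sub]
    gcongr
    exact hmin _ hz
  rw [lp.norm_sub_single_sq, lp.coeFn_sub, Pi.sub_apply] at hsq
  have hpi := hp i
  rcases le_total 0 (y i) with hy | hy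
  · rw [max_eq_left hy] at hsq ⊢
    nlinarith
  · rw [max_eq_right hy] at hsq ⊢
    nlinarith

theorem exists_lt_abs_max_add_sub (c a : ℝ) (hc : c ≠ 0) :
    ∃ t, |t| ≤ 2 * |c| ∧ |t| / 8 < |max (c + t) 0 - max c 0 - a * t| := by
  by_contra! h
  have h₁ := h (-c / 2) (by rw [abs_div, abs_neg]; have := abs_nonneg c; linarith)
  have h₂ := h (-2 * c) (by rw [abs_mul]; norm_num)
  rcases hc.lt_or_gt with hc | hc
  · simp only [abs_of_neg hc, abs_div, abs_neg, abs_mul] at h₁ h₂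
    rw [max_eq_right (by linarith), max_eq_right hc.le] at h₁
    rw [max_eq_left (by linarith), max_eq_right hc.le] at h₂
    rw [abs_le] at h₁ h₂
    norm_num at h₁ h₂
    nlinarith
  · simp only [abs_of_pos hc, abs_div, abs_neg, abs_mul] at h₁ h₂
    rw [max_eq_left (by linarith), max_eq_left hc.le] at h₁
    rw [max_eq_right (by linarith), max_eq_left hc.le] at h₂
    rw [abs_le] at h₁ h₂
    norm_num at h₁ h₂
    nlinarith

theorem hasFDerivAt_of_tendsto_nhdsNE {E F : Type*} [NormedAddCommGroup E] [NormedSpace ℝ E]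
    [NormedAddCommGroup F] [NormedSpace ℝ F] {f : E → F} {f' : E →L[ℝ] F} {x : E}
    (h : Tendsto (fun u => ‖u - x‖⁻¹ • (f u - f x - f' (u - x))) (𝓝[≠] x) (𝓝 0)) :
    HasFDerivAt f f' x := by
  rw [hasFDerivAt_iff_tendsto, ← nhdsNE_sup_pure, tendsto_sup, tendsto_pure_left]
  exact ⟨by simpa [norm_smul] using h.norm, fun s hs => by simpa using mem_of_mem_nhds hs⟩

theorem lp.tendsto_norm_apply_cofinite {α : Type*} {E : α → Type*}
    [∀ i, NormedAddCommGroup (E i)] {p : ENNReal} (hp : 0 < p.toReal) (f : lp E p) :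
    Tendsto (fun i => ‖f i‖) cofinite (𝓝 0) := by
  have h := ((lp.memℓp f).summable hp).tendsto_cofinite_zero.rpow_const
    (p := p.toReal⁻¹) (Or.inr (inv_nonneg.2 hp.le))
  simpa [← Real.rpow_mul (norm_nonneg _), mul_inv_cancel₀ hp.ne', Real.zero_rpow hp.ne',
    (inv_pos.2 hp).ne'] using h

theorem not_differentiableAt_of_apply_eq_max_zero {ι : Type*} [Infinite ι]
    {P : lp (fun _ : ι => ℝ) 2 → lp (fun _ : ι => ℝ) 2} (hP : ∀ y i, P y i = max (y i) 0)
    {x : lp (fun _ : ι => ℝ) 2} (hx : ∀ i, x i ≠ 0) : ¬ DifferentiableAt ℝ P x := by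
  classical
  rintro ⟨A, hA⟩
  obtain ⟨δ, hδ, hsmall⟩ : ∃ δ > 0, ∀ h : lp (fun _ : ι => ℝ) 2, ‖h‖ < δ →
      ‖P (x + h) - P x - A h‖ ≤ ‖h‖ / 8 := by
    have hlittle :=
      (hasFDerivAt_iff_isLittleO_nhds_zero.1 hA).def (by norm_num : (0 : ℝ) < 1 / 8)
    obtain ⟨δ, hδ, hball⟩ := Metric.eventually_nhds_iff.1 hlittle
    exact ⟨δ, hδ, fun h hh => by simpa [div_eq_inv_mul] using hball (by simpa using hh)⟩
  obtain ⟨m, hm⟩ : ∃ m, ‖x m‖ < δ / 2 :=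
    ((lp.tendsto_norm_apply_cofinite (by norm_num) x).eventually_lt_const (by positivity)).exists
  obtain ⟨t, ht, hlt⟩ := exists_lt_abs_max_add_sub (x m) (A (lp.single 2 m 1) m) (hx m)
  have hnorm : ‖(lp.single 2 m t : lp (fun _ : ι => ℝ) 2)‖ = |t| :=
    lp.norm_single (by norm_num) _ _
  have hcoord : (P (x + lp.single 2 m t) - P x - A (lp.single 2 m t)) m
      = max (x m + t) 0 - max (x m) 0 - A (lp.single 2 m 1) m * t := by
    have hsingle : (lp.single 2 m t : lp (fun _ : ι => ℝ) 2) = t • lp.single 2 m 1 := by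
      rw [← lp.single_smul, smul_eq_mul, mul_one]
    simp only [lp.coeFn_sub, Pi.sub_apply, hP, lp.coeFn_add, Pi.add_apply, lp.single_apply_self]
    rw [hsingle, map_smul, lp.coeFn_smul, Pi.smul_apply, smul_eq_mul, mul_comm]
  rw [Real.norm_eq_abs] at hm
  have hbound := (lp.norm_apply_le_norm (by norm_num) _ m).trans
    (hsmall (lp.single 2 m t) (by rw [hnorm]; linarith))
  rw [hcoord, hnorm, Real.norm_eq_abs] at hbound
  linarith

theorem not_frechet_proj_positiveCone_lp2_mixed_general
    (P : lp (fun _ : ℕ => ℝ) 2 → lp (fun _ : ℕ => ℝ) 2)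
    (hP : ∀ x, (∀ i : ℕ, 0 ≤ P x i) ∧
      ∀ z : lp (fun _ : ℕ => ℝ) 2, (∀ i : ℕ, 0 ≤ z i) → ‖x - P x‖ ≤ ‖x - z‖)
    (x : lp (fun _ : ℕ => ℝ) 2) (hx1 : ∀ i : ℕ, x i ≠ 0) :
    ¬ ∃ A : lp (fun _ : ℕ => ℝ) 2 →L[ℝ] lp (fun _ : ℕ => ℝ) 2,
      Filter.Tendsto (fun u => ‖u - x‖⁻¹ • (P u - P x - A (u - x)))
        (𝓝[≠] x) (𝓝 0) := by
  rintro ⟨A, hA⟩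
  have hproj : ∀ y i, P y i = max (y i) 0 := fun y =>
    apply_eq_max_zero_of_forall_norm_sub_le (hP y).1 (hP y).2
  exact not_differentiableAt_of_apply_eq_max_zero hproj hx1
    (hasFDerivAt_of_tendsto_nhdsNE hA).differentiableAt

/-- The metric projection `P` onto the positive cone `𝕂` of `ℓ²` is not Fréchet
differentiable at any point `x` with all coordinates nonzero and at least two
coordinates of opposite signs. -/
theorem not_frechet_proj_positiveCone_lp2_mixed
    (P : lp (fun _ : ℕ => ℝ) 2 → lp (fun _ : ℕ => ℝ) 2)
    (hP : ∀ x, (∀ i : ℕ, 0 ≤ P x i) ∧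
      ∀ z : lp (fun _ : ℕ => ℝ) 2, (∀ i : ℕ, 0 ≤ z i) → ‖x - P x‖ ≤ ‖x - z‖)
    (x : lp (fun _ : ℕ => ℝ) 2) (hx1 : ∀ i : ℕ, x i ≠ 0)
    (hx2 : ∃ j k : ℕ, x j * x k < 0) :
    ¬ ∃ A : lp (fun _ : ℕ => ℝ) 2 →L[ℝ] lp (fun _ : ℕ => ℝ) 2,
      Filter.Tendsto (fun u => ‖u - x‖⁻¹ • (P u - P x - A (u - x)))
        (𝓝[≠] x) (𝓝 0) :=
  not_frechet_proj_positiveCone_lp2_mixed_general P hP x hx1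
end
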